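/- Let q : E ⥤ D be a cloven Grothendieck fibration and d : D. Let Fun_{/D}^{cart}(Over d, E) denote the category of functors F : Over d ⥤ E with F ⋙ q equal to the forgetful functor Over d ⥤ D, sending all morphisms of Over d to q-cartesian morphisms of E, with morphisms the natural transformations lying over identities. Then evaluation at the object 𝟙_d of Over d induces an equivalence of categories Fun_{/D}^{cart}(Over d, E) ≃ E_d, where E_d is the fibre of q over d. -/

import Mathlib

open CategoryTheory CategoryTheory.Limits

/-- `φ` is a (strongly) cartesian morphism over `u : i ⟶ j` for the functor `q`. -/
def IsCart {E C : Type*} [Category E] [Category C] (q : E ⥤ C) {i j : C} (u : i ⟶ j)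
    {z x : E} (φ : z ⟶ x) : Prop :=
  q.IsHomLift u φ ∧
    ∀ ⦃i' : C⦄ (v : i' ⟶ i) ⦃w : E⦄ (ψ : w ⟶ x), q.IsHomLift (v ≫ u) ψ →
      ∃! χ : w ⟶ z, q.IsHomLift v χ ∧ χ ≫ φ = ψ

variable {C E : Type*} [Category C] [Category E]

/-- An object of `Fun_{/D}^{cart}(Over d, E)`: a functor `Over d ⥤ E` lying strictly over
`C` (via `q` and the forgetful functor) and sending every morphism of `Over d` to a
`q`-cartesian morphism of `E`. -/
structure CartSec (q : E ⥤ C) (d : C) where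
  func : Over d ⥤ E
  isOver : func ⋙ q = Over.forget d
  cart : ∀ {A B : Over d} (m : A ⟶ B), IsCart q ((Over.forget d).map m) (func.map m)

/-- Morphisms in `Fun_{/D}^{cart}(Over d, E)` are natural transformations all of whose
components lie over identities. -/
instance CartSec.category (q : E ⥤ C) (d : C) : Category (CartSec q d) where
  Hom F G := {α : F.func ⟶ G.func // ∀ A : Over d, q.IsHomLift (𝟙 A.left) (α.app A)}
  id F := ⟨𝟙 F.func, fun A => CategoryTheory.IsHomLift.id (Functor.congr_obj F.isOver A)⟩
  comp {F G H} α β := ⟨α.1 ≫ β.1, fun A => by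
    have := α.2 A
    have := β.2 A
    simp only [NatTrans.comp_app]
    infer_instance⟩
  id_comp α := by apply Subtype.ext; simp
  comp_id α := by apply Subtype.ext; simp
  assoc α β γ := by apply Subtype.ext; simp

/-- Evaluation at the object `𝟙 d` of `Over d`. -/
def evalAtId (q : E ⥤ C) (d : C) : CartSec q d ⥤ Functor.Fiber q d where
  obj F := Functor.Fiber.mk (Functor.congr_obj F.isOver (Over.mk (𝟙 d)))
  map {F G} α := Subtype.mk ((Subtype.val α).app (Over.mk (𝟙 d))) (Subtype.property α (Over.mk (𝟙 d)))
  map_id F := by apply Subtype.ext; rfl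
  map_comp α β := by apply Subtype.ext; rfl

/-! `Over.mk (𝟙 d)` is terminal in `Over d`, and a cartesian functor `F` sends the unique map
`A ⟶ 𝟙 d` to a cartesian morphism over `A.hom`. So `F A` is a cartesian lift of `F (𝟙 d)` along
`A.hom`, and a fibre morphism `F (𝟙 d) ⟶ G (𝟙 d)` extends uniquely to every `A` by the universal
property of `G (A ⟶ 𝟙 d)`: evaluation is fully faithful. Conversely, cartesian lifts of `x` along
all the `A.hom`, connected by the maps their universal properties induce, form a cartesian functor
whose value at `𝟙 d` is isomorphic to `x`, since a cartesian morphism over an identity is invertible. -/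

open Functor

lemma isCart_iff_isStronglyCartesian {q : E ⥤ C} {i j : C} (u : i ⟶ j) {z x : E} (φ : z ⟶ x) :
    IsCart q u φ ↔ q.IsStronglyCartesian u φ := by
  constructor
  · rintro ⟨hφ, huniv⟩
    exact { toIsHomLift := hφ, universal_property' := fun g φ' _ => huniv g φ' inferInstance }
  · intro hφ
    exact ⟨inferInstance, fun _ v _ ψ _ => IsStronglyCartesian.universal_property q u φ v _ rfl ψ⟩

noncomputable def Functor.Fiber.isoOfIsStronglyCartesian {q : E ⥤ C} {S : C} {a b : Fiber q S}
    (φ : a.1 ⟶ b.1) [hφ : q.IsStronglyCartesian (𝟙 S) φ] : a ≅ b :=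
  haveI := IsStronglyCartesian.isIso_of_base_isIso q (𝟙 S) φ
  { hom := ⟨φ, inferInstance⟩
    inv := ⟨inv φ, inferInstance⟩
    hom_inv_id := Subtype.ext (IsIso.hom_inv_id φ)
    inv_hom_id := Subtype.ext (IsIso.inv_hom_id φ) }

instance IsStronglyCartesian.map_isStronglyCartesian (p : E ⥤ C) {R S R' : C} {a b a' : E}
    (f : R ⟶ S) (φ : a ⟶ b) [p.IsStronglyCartesian f φ] {g : R' ⟶ R} {f' : R' ⟶ S}
    (hf' : f' = g ≫ f) (φ' : a' ⟶ b) [p.IsStronglyCartesian f' φ'] :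
    p.IsStronglyCartesian g (IsStronglyCartesian.map p f φ hf' φ') := by
  subst hf'
  have : p.IsStronglyCartesian (g ≫ f) (IsStronglyCartesian.map p f φ (g := g) rfl φ' ≫ φ) := by
    rwa [IsStronglyCartesian.fac]
  exact IsStronglyCartesian.of_comp p (g := f) (ψ := φ)

namespace CartSec

variable {q : E ⥤ C} {d : C}

instance isStronglyCartesian_map (F : CartSec q d) {A B : Over d} (m : A ⟶ B) :
    q.IsStronglyCartesian m.left (F.func.map m) :=
  (isCart_iff_isStronglyCartesian _ _).mp (F.cart m)

lemma hom_ext {F G : CartSec q d} {α β : F ⟶ G}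
    (h : α.1.app (Over.mk (𝟙 d)) = β.1.app (Over.mk (𝟙 d))) : α = β := by
  refine Subtype.ext (NatTrans.ext (funext fun A => ?_))
  have := α.2 A
  have := β.2 A
  let t := Over.mkIdTerminal.from A
  apply IsStronglyCartesian.ext q t.left (G.func.map t) (𝟙 A.left)
  rw [← α.1.naturality, ← β.1.naturality, h]

section homMk

variable {F G : CartSec q d} (f : F.func.obj (Over.mk (𝟙 d)) ⟶ G.func.obj (Over.mk (𝟙 d)))
  [hf : q.IsHomLift (𝟙 d) f]

instance isHomLift_map_comp {A : Over d} (m : A ⟶ Over.mk (𝟙 d)) :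
    q.IsHomLift m.left (F.func.map m ≫ f) :=
  IsHomLift.comp_lift_id_right' q m.left (F.func.map m) d f

noncomputable def homMkApp (A : Over d) : F.func.obj A ⟶ G.func.obj A :=
  IsStronglyCartesian.map q (Over.mkIdTerminal.from A).left (G.func.map (Over.mkIdTerminal.from A))
    (Category.id_comp _).symm (F.func.map (Over.mkIdTerminal.from A) ≫ f)

instance isHomLift_homMkApp (A : Over d) : q.IsHomLift (𝟙 A.left) (homMkApp f A) := by
  unfold homMkApp; infer_instance

lemma homMkApp_naturality {A B : Over d} (m : A ⟶ B) :
    F.func.map m ≫ homMkApp f B = homMkApp f A ≫ G.func.map m := by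
  apply IsStronglyCartesian.ext q (Over.mkIdTerminal.from B).left
    (G.func.map (Over.mkIdTerminal.from B)) m.left
  simp only [homMkApp, Category.assoc, IsStronglyCartesian.fac, ← Functor.map_comp,
    ← Functor.map_comp_assoc, IsTerminal.comp_from]

noncomputable def homMk : F ⟶ G :=
  ⟨{ app := homMkApp f, naturality := fun _ _ m => homMkApp_naturality f m },
    fun A => isHomLift_homMkApp f A⟩

lemma homMk_app_terminal : (homMk f).1.app (Over.mk (𝟙 d)) = f := by
  have : q.IsHomLift (𝟙 (Over.mk (𝟙 d)).left) f := inferInstanceAs (q.IsHomLift (𝟙 d) f)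
  refine (IsStronglyCartesian.map_uniq q (Over.mkIdTerminal.from _).left (G.func.map _)
    (Category.id_comp _).symm (F.func.map _ ≫ f) f ?_).symm
  simp only [IsTerminal.from_self, CategoryTheory.Functor.map_id, Category.comp_id,
    Category.id_comp]

end homMk

instance faithful_evalAtId : (evalAtId q d).Faithful :=
  ⟨fun h => hom_ext (congrArg Subtype.val h)⟩

instance full_evalAtId : (evalAtId q d).Full :=
  ⟨fun f => ⟨homMk f.1 (hf := f.2), Subtype.ext (homMk_app_terminal f.1 (hf := f.2))⟩⟩

section ofCartesianLifts

variable {x : Fiber q d} (z : Over d → E) (φ : ∀ A, z A ⟶ x.1)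
  [∀ A, q.IsStronglyCartesian A.hom (φ A)]

noncomputable def liftsFunctor : Over d ⥤ E where
  obj := z
  map {A B} m := IsStronglyCartesian.map q B.hom (φ B) (Over.w m).symm (φ A)
  map_id A := by
    have : q.IsHomLift (𝟙 A : A ⟶ A).left (𝟙 (z A)) := by
      rw [Over.id_left]; exact IsHomLift.id (IsHomLift.domain_eq q A.hom (φ A))
    exact (IsStronglyCartesian.map_uniq q _ _ _ _ _ (Category.id_comp _)).symm
  map_comp {A B B'} _ _ :=
    (IsStronglyCartesian.map_comp_map q B'.hom (φ B') _ _ (φ B) (φ A)).symm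

instance isStronglyCartesian_liftsFunctor_map {A B : Over d} (m : A ⟶ B) :
    q.IsStronglyCartesian m.left ((liftsFunctor z φ).map m) :=
  IsStronglyCartesian.map_isStronglyCartesian q B.hom (φ B) (Over.w m).symm (φ A)

noncomputable def ofCartesianLifts : CartSec q d where
  func := liftsFunctor z φ
  isOver := CategoryTheory.Functor.ext
    (fun A => (IsHomLift.domain_eq q A.hom (φ A) : q.obj (z A) = A.left))
    (fun _ _ m => IsHomLift.fac' q m.left _)
  cart m := (isCart_iff_isStronglyCartesian m.left _).mpr inferInstance

noncomputable def evalAtIdObjOfCartesianLiftsIso : (evalAtId q d).obj (ofCartesianLifts z φ) ≅ x :=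
  Fiber.isoOfIsStronglyCartesian (φ (Over.mk (𝟙 d)))
    (hφ := inferInstanceAs (q.IsStronglyCartesian (Over.mk (𝟙 d)).hom (φ (Over.mk (𝟙 d)))))

end ofCartesianLifts

instance essSurj_evalAtId [q.IsFibered] : (evalAtId q d).EssSurj :=
  ⟨fun x => ⟨_, ⟨evalAtIdObjOfCartesianLiftsIso (fun A => IsPreFibered.pullbackObj x.2 A.hom)
    (fun A => IsPreFibered.pullbackMap x.2 A.hom)⟩⟩⟩

end CartSec

/-- **The slice `Over d` is the free fibration on the single object `d`**
(1-categorical Yoneda lemma for fibrations): for a cloven Grothendieck fibration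
`q : E ⥤ C` and `d : C`, evaluation at `𝟙 d` is an equivalence between the category of
cartesian functors `Over d ⥤ E` over `C` and the fibre of `q` over `d`. -/
theorem evalAtId_isEquivalence (q : E ⥤ C) (d : C)
    (hfib : ∀ {i j : C} (u : i ⟶ j) (x : E), q.obj x = j →
      ∃ (z : E) (φ : z ⟶ x), IsCart q u φ) :
    (evalAtId q d).IsEquivalence := by
  have : q.IsFibered := IsFibered.of_exists_isStronglyCartesian fun x _ f => by
    obtain ⟨z, φ, hφ⟩ := hfib f x rfl
    exact ⟨z, φ, (isCart_iff_isStronglyCartesian f φ).mp hφ⟩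
  exact { }
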